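/- Let d be a positive integer, let M be a real d×d symmetric positive definite matrix, let D be a real d×d symmetric positive semidefinite matrix, and let F be an invertible real d×d matrix. Then ‖F⁻¹ D F⁻ᵀ‖₂ ≤ ‖F⁻¹ M⁻¹ F⁻ᵀ‖₂ · ‖M D‖₂, where ‖·‖₂ denotes the spectral norm. -/

import Mathlib

/-!
Put `X = Gᴴ M⁻¹ G` with `G = F⁻ᵀ` and `Y = Gᴴ D G`, and let `R = √X`. Then
`Y = R S R` with `S = R⁻¹ Y R⁻¹`, so `‖Y‖ ≤ ‖R‖² ‖S‖ = ‖X‖ ‖S‖`. Since `R⁻¹ Gᴴ = R G⁻¹ M`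
(a rewriting of `R R = X`), `S = P (M D) P⁻¹` with `P = R G⁻¹`: the Hermitian matrix `S` is
similar to `M D`. The norm of a Hermitian matrix is its spectral radius, which is invariant
under similarity and bounded by the norm, so `‖S‖ ≤ ‖M D‖`.
-/

open Matrix

/-- The spectral norm of a real `d × d` matrix: the operator norm of the
induced linear map on Euclidean space. -/
noncomputable def specNorm {d : ℕ} (A : Matrix (Fin d) (Fin d) ℝ) : ℝ :=
  ‖(Matrix.toEuclideanCLM (𝕜 := ℝ) (n := Fin d) A :
      EuclideanSpace ℝ (Fin d) →L[ℝ] EuclideanSpace ℝ (Fin d))‖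

open scoped Matrix.Norms.L2Operator MatrixOrder ComplexOrder

namespace Matrix

variable {𝕜 n : Type*} [RCLike 𝕜] [Fintype n] [DecidableEq n]

lemma IsHermitian.spectralRadius_eq_l2_opNNNorm {A : Matrix n n 𝕜} (hA : A.IsHermitian) :
    spectralRadius 𝕜 A = ‖A‖₊ := by
  rw [cstar_nnnorm_def, ← ContinuousLinearMap.spectralRadius_eq_nnnorm _
    (hA.isSelfAdjoint.map toEuclideanCLM), spectralRadius, spectralRadius,
    AlgEquiv.spectrum_eq toEuclideanCLM]

lemma IsHermitian.l2_opNorm_le_of_eq_conj {S B P : Matrix n n 𝕜} (hS : S.IsHermitian)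
    (hP : IsUnit P) (h : S = P * B * P⁻¹) : ‖S‖ ≤ ‖B‖ := by
  have hspec : spectrum 𝕜 S = spectrum 𝕜 B := by
    rw [h, ← hP.unit_spec, ← coe_units_inv]
    exact spectrum.units_conjugate
  -- `spectralRadius_le_nnnorm` needs `‖1‖ = 1`, which fails for `0 × 0` matrices.
  rcases isEmpty_or_nonempty n with _ | _
  · simp [Subsingleton.elim S 0]
  have : spectralRadius 𝕜 S ≤ ‖B‖₊ := by
    rw [spectralRadius, hspec]
    exact spectrum.spectralRadius_le_nnnorm B
  rw [hS.spectralRadius_eq_l2_opNNNorm] at this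
  exact_mod_cast this

lemma l2_opNorm_le_mul_of_mul_self_eq {R X : Matrix n n 𝕜} (hR : R.IsHermitian)
    (hRu : IsUnit R) (hRX : R * R = X) (Y : Matrix n n 𝕜) :
    ‖Y‖ ≤ ‖X‖ * ‖R⁻¹ * Y * R⁻¹‖ := by
  have hRdet := (isUnit_iff_isUnit_det R).mp hRu
  have hY : Y = R * (R⁻¹ * Y * R⁻¹) * R := by
    simp only [← mul_assoc, mul_nonsing_inv _ hRdet, one_mul]
    simp only [mul_assoc, nonsing_inv_mul _ hRdet, mul_one]
  have hX : ‖X‖ = ‖R‖ * ‖R‖ := by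
    rw [← hRX, ← l2_opNorm_conjTranspose_mul_self, hR.eq]
  calc ‖Y‖ = ‖R * (R⁻¹ * Y * R⁻¹) * R‖ := by rw [← hY]
    _ ≤ ‖R‖ * ‖R⁻¹ * Y * R⁻¹‖ * ‖R‖ := by
      grw [l2_opNorm_mul, l2_opNorm_mul]
    _ = ‖X‖ * ‖R⁻¹ * Y * R⁻¹‖ := by rw [hX]; ring

theorem l2_opNorm_conjTranspose_mul_mul_le {M D G : Matrix n n 𝕜} (hM : M.PosDef)
    (hD : D.IsHermitian) (hG : IsUnit G) :
    ‖Gᴴ * D * G‖ ≤ ‖Gᴴ * M⁻¹ * G‖ * ‖M * D‖ := by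
  set X := Gᴴ * M⁻¹ * G
  have hX : X.PosSemidef := hM.inv.posSemidef.conjTranspose_mul_mul_same G
  have hXu : IsUnit X := (hG.star.mul (isUnit_nonsing_inv_iff.mpr hM.isUnit)).mul hG
  set R := CFC.sqrt X
  have hR : R.IsHermitian := (nonneg_iff_posSemidef.mp (CFC.sqrt_nonneg X)).isHermitian
  have hRu : IsUnit R := (CFC.isUnit_sqrt_iff X hX.nonneg).mpr hXu
  have hRR : R * R = X := CFC.sqrt_mul_sqrt_self X hX.nonneg
  refine (l2_opNorm_le_mul_of_mul_self_eq hR hRu hRR _).trans <|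
    mul_le_mul_of_nonneg_left ?_ (norm_nonneg _)
  refine IsHermitian.l2_opNorm_le_of_eq_conj ?_ (hRu.mul (isUnit_nonsing_inv_iff.mpr hG)) ?_
  · convert isHermitian_conjTranspose_mul_mul (G * R⁻¹) hD using 1
    simp only [conjTranspose_mul, conjTranspose_nonsing_inv, hR.eq, mul_assoc]
  · have hGdet := (isUnit_iff_isUnit_det G).mp hG
    have hRdet := (isUnit_iff_isUnit_det R).mp hRu
    have hMdet := (isUnit_iff_isUnit_det M).mp hM.isUnit
    have hRinvG : R⁻¹ * Gᴴ = R * G⁻¹ * M := calc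
      R⁻¹ * Gᴴ = R⁻¹ * (Gᴴ * M⁻¹ * G) * G⁻¹ * M := by
        simp only [mul_assoc, mul_nonsing_inv_cancel_left _ _ hGdet,
          nonsing_inv_mul _ hMdet, mul_one]
      _ = R⁻¹ * (R * R) * G⁻¹ * M := by rw [hRR]
      _ = R * G⁻¹ * M := by
        rw [← mul_assoc, nonsing_inv_mul _ hRdet, one_mul]
    rw [mul_inv_rev, nonsing_inv_nonsing_inv _ hGdet]
    simp only [← mul_assoc, hRinvG]

end Matrix

lemma specNorm_eq_l2_opNorm {d : ℕ} (A : Matrix (Fin d) (Fin d) ℝ) : specNorm A = ‖A‖ := rfl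

theorem stmt_6_general (d : ℕ)
    (M D F : Matrix (Fin d) (Fin d) ℝ)
    (hM : M.PosDef) (hD : D.PosSemidef) (hF : IsUnit F) :
    specNorm (F⁻¹ * D * (Fᵀ)⁻¹) ≤
      specNorm (F⁻¹ * M⁻¹ * (Fᵀ)⁻¹) * specNorm (M * D) := by
  have hG : IsUnit (Fᵀ)⁻¹ := isUnit_nonsing_inv_iff.mpr ((isUnit_transpose F).mpr hF)
  have hGH : ((Fᵀ)⁻¹)ᴴ = F⁻¹ := by
    rw [conjTranspose_eq_transpose_of_trivial, transpose_nonsing_inv, transpose_transpose]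
  simp only [specNorm_eq_l2_opNorm]
  simpa only [hGH] using l2_opNorm_conjTranspose_mul_mul_le hM hD.isHermitian hG

theorem stmt_6 (d : ℕ) (hd : 0 < d)
    (M D F : Matrix (Fin d) (Fin d) ℝ)
    (hM : M.PosDef) (hD : D.PosSemidef) (hF : IsUnit F) :
    specNorm (F⁻¹ * D * (Fᵀ)⁻¹) ≤
      specNorm (F⁻¹ * M⁻¹ * (Fᵀ)⁻¹) * specNorm (M * D) :=
  stmt_6_general d M D F hM hD hF
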